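/- Let K ≥ 2 and N = K². Let A be an N×N complex Hermitian matrix (indexed by Fin K × Fin K) with Tr A = 1. If ‖A − I/N‖_HS ≤ 1/√(N(N−1)), then both A and its partial transpose T₂A are positive semidefinite; that is, A is a PPT state. Hence the set of PPT states contains the ball of radius r = 1/√(N(N−1)) around the maximally mixed state, the same inscribed radius as the full set of quantum states Ω_N. -/

import Mathlib

open Matrix ComplexOrder

/-- The partial transpose `T₂ = I ⊗ T` on operators on `ℂ^K ⊗ ℂ^K`:
`(T₂ρ)_{(i,j),(k,l)} = ρ_{(i,l),(k,j)}`. -/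
def partialTranspose {K : ℕ} (ρ : Matrix (Fin K × Fin K) (Fin K × Fin K) ℂ) :
    Matrix (Fin K × Fin K) (Fin K × Fin K) ℂ :=
  fun p q => ρ (p.1, q.2) (q.1, p.2)

/-!
Write `A = I/N + B`, so `Tr B = 0`. If `λ` is an eigenvalue of `A`, the other `N - 1` eigenvalues
of `B` sum to `-(λ - 1/N)`, and Cauchy–Schwarz gives `N (λ - 1/N)² ≤ (N - 1) ‖B‖²_HS ≤ 1/N`,
whence `|N λ - 1| ≤ 1` and `λ ≥ 0`. The partial transpose preserves Hermiticity, the trace, the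
identity and the Hilbert–Schmidt norm, so `T₂A` satisfies the same hypotheses as `A`.
-/

open Finset in
theorem card_mul_sq_le_of_sum_eq_zero {ι : Type*} [Fintype ι] {g : ι → ℝ}
    (hg : ∑ i, g i = 0) (j : ι) :
    Fintype.card ι * g j ^ 2 ≤ (Fintype.card ι - 1) * ∑ i, g i ^ 2 := by
  classical
  have hrest : ∑ i ∈ univ.erase j, g i = -g j := by
    linarith [add_sum_erase univ g (mem_univ j)]
  have hrest_sq : ∑ i ∈ univ.erase j, g i ^ 2 = ∑ i, g i ^ 2 - g j ^ 2 := by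
    linarith [add_sum_erase univ (g · ^ 2) (mem_univ j)]
  have hcs := sq_sum_le_card_mul_sum_sq (s := univ.erase j) (f := g)
  rw [hrest, hrest_sq, card_erase_of_mem (mem_univ j), card_univ,
    Nat.cast_sub (Fintype.card_pos_iff.2 ⟨j⟩), Nat.cast_one, neg_sq] at hcs
  linarith

theorem nonneg_of_sum_eq_one_of_sum_sq_sub_inv_card_le {ι : Type*} [Fintype ι] {f : ι → ℝ}
    (hsum : ∑ i, f i = 1)
    (hsq : ∑ i, (f i - (Fintype.card ι : ℝ)⁻¹) ^ 2 ≤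
      ((Fintype.card ι : ℝ) * (Fintype.card ι - 1))⁻¹) (j : ι) :
    0 ≤ f j := by
  have hcard : 0 < Fintype.card ι := Fintype.card_pos_iff.2 ⟨j⟩
  set n : ℝ := (Fintype.card ι : ℝ)
  have hn : 0 < n := Nat.cast_pos.2 hcard
  have hcentered : ∑ i, (f i - n⁻¹) = 0 := by
    simp [Finset.sum_sub_distrib, hsum, n, hn.ne']
  have hbound : (n * (f j - n⁻¹)) ^ 2 ≤ 1 := calc
    (n * (f j - n⁻¹)) ^ 2 = n * (n * (f j - n⁻¹) ^ 2) := by ring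
    _ ≤ n * ((n - 1) * ∑ i, (f i - n⁻¹) ^ 2) :=
      mul_le_mul_of_nonneg_left (card_mul_sq_le_of_sum_eq_zero hcentered j) hn.le
    _ ≤ n * (n - 1) * (n * (n - 1))⁻¹ := by
      rw [← mul_assoc]
      exact mul_le_mul_of_nonneg_left hsq
        (mul_nonneg hn.le (sub_nonneg.2 (Nat.one_le_cast.2 hcard)))
    _ ≤ 1 := mul_inv_le_one
  rw [show n * (f j - n⁻¹) = n * f j - 1 by field_simp] at hbound
  exact (mul_nonneg_iff_of_pos_left hn).1 (by nlinarith)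

namespace Matrix

variable {n 𝕜 : Type*} [Fintype n] [DecidableEq n] [RCLike 𝕜]

theorem trace_conjStarAlgAut (U : unitaryGroup n 𝕜) (X : Matrix n n 𝕜) :
    (Unitary.conjStarAlgAut 𝕜 _ U X).trace = X.trace := by
  rw [Unitary.conjStarAlgAut_apply, trace_mul_cycle, Unitary.coe_star_mul_self, one_mul]

theorem IsHermitian.re_trace_conjTranspose_mul_self_sub_smul_one {A : Matrix n n 𝕜}
    (hA : A.IsHermitian) (c : ℝ) :
    RCLike.re (((A - (c : 𝕜) • 1)ᴴ * (A - (c : 𝕜) • 1)).trace) =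
      ∑ i, (hA.eigenvalues i - c) ^ 2 := by
  set φ := Unitary.conjStarAlgAut 𝕜 (Matrix n n 𝕜) hA.eigenvectorUnitary
  have hshift : A - (c : 𝕜) • 1 = φ (diagonal fun i ↦ ((hA.eigenvalues i - c : ℝ) : 𝕜)) := by
    have : diagonal (fun i ↦ ((hA.eigenvalues i - c : ℝ) : 𝕜)) =
        diagonal (RCLike.ofReal ∘ hA.eigenvalues) - (c : 𝕜) • 1 := by
      rw [smul_one_eq_diagonal, diagonal_sub]
      simp
    rw [this, map_sub, map_smul, map_one, ← hA.spectral_theorem]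
  rw [hshift, ← star_eq_conjTranspose, ← map_star, ← map_mul, trace_conjStarAlgAut,
    star_eq_conjTranspose, diagonal_conjTranspose, diagonal_mul_diagonal, trace_diagonal,
    map_sum]
  simp [sq]

theorem IsHermitian.posSemidef_of_re_trace_le {A : Matrix n n 𝕜} (hA : A.IsHermitian)
    (htr : A.trace = 1)
    (hdist : RCLike.re (((A - (Fintype.card n : 𝕜)⁻¹ • 1)ᴴ *
        (A - (Fintype.card n : 𝕜)⁻¹ • 1)).trace) ≤
      ((Fintype.card n : ℝ) * (Fintype.card n - 1))⁻¹) :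
    A.PosSemidef := by
  refine hA.posSemidef_iff_eigenvalues_nonneg.2 fun i ↦
    nonneg_of_sum_eq_one_of_sum_sq_sub_inv_card_le ?_ ?_ i
  · have := hA.trace_eq_sum_eigenvalues
    rw [htr] at this
    exact_mod_cast this.symm
  · rw [← hA.re_trace_conjTranspose_mul_self_sub_smul_one]
    simpa using hdist

end Matrix

section PartialTranspose

variable {K : ℕ}

theorem partialTranspose_sub_smul_one (A : Matrix (Fin K × Fin K) (Fin K × Fin K) ℂ) (c : ℂ) :
    partialTranspose (A - c • 1) = partialTranspose A - c • 1 := by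
  ext ⟨a, b⟩ ⟨c, d⟩
  by_cases hac : a = c <;> by_cases hbd : b = d <;>
    simp [partialTranspose, one_apply, hac, hbd, eq_comm]

theorem trace_partialTranspose (A : Matrix (Fin K × Fin K) (Fin K × Fin K) ℂ) :
    (partialTranspose A).trace = A.trace := rfl

theorem Matrix.IsHermitian.partialTranspose {A : Matrix (Fin K × Fin K) (Fin K × Fin K) ℂ}
    (hA : A.IsHermitian) : (partialTranspose A).IsHermitian := by
  ext p q
  exact congrFun₂ hA (p.1, q.2) (q.1, p.2)

theorem trace_conjTranspose_mul_self_partialTranspose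
    (M : Matrix (Fin K × Fin K) (Fin K × Fin K) ℂ) :
    ((partialTranspose M)ᴴ * partialTranspose M).trace = (Mᴴ * M).trace := by
  simp only [trace, diag, mul_apply, conjTranspose_apply, partialTranspose,
    Fintype.sum_prod_type]
  refine Finset.sum_congr rfl fun _ _ ↦ ?_
  rw [Finset.sum_comm]
  conv_rhs => rw [Finset.sum_comm]
  exact Finset.sum_congr rfl fun _ _ ↦ Finset.sum_comm

end PartialTranspose

theorem ppt_states_insphere_radius_general (K : ℕ) (N : ℕ) (hN : N = K ^ 2)
    (A : Matrix (Fin K × Fin K) (Fin K × Fin K) ℂ) (hherm : A.IsHermitian)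
    (htr : A.trace = 1)
    (hdist : Real.sqrt (((A - (N : ℂ)⁻¹ • 1)ᴴ * (A - (N : ℂ)⁻¹ • 1)).trace.re)
      ≤ 1 / Real.sqrt (N * (N - 1))) :
    A.PosSemidef ∧ (partialTranspose A).PosSemidef := by
  have hpos : (0 : ℝ) ≤ N * (N - 1) := by
    rcases N with _ | m
    · simp
    · push_cast
      simp only [add_sub_cancel_right]
      positivity
  rw [one_div, ← Real.sqrt_inv, Real.sqrt_le_sqrt_iff (inv_nonneg.2 hpos)] at hdist
  have hcard : Fintype.card (Fin K × Fin K) = N := by simp [hN, sq]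
  subst hcard
  refine ⟨hherm.posSemidef_of_re_trace_le htr hdist,
    hherm.partialTranspose.posSemidef_of_re_trace_le (by rw [trace_partialTranspose, htr]) ?_⟩
  rwa [← partialTranspose_sub_smul_one, trace_conjTranspose_mul_self_partialTranspose]

/-- If `A` is a Hermitian trace-one matrix on `ℂ^K ⊗ ℂ^K` (so `N = K²`) with
`‖A − I/N‖_HS ≤ 1/√(N(N−1))`, then both `A` and its partial transpose are positive
semidefinite, i.e. `A` is a PPT state: the set of PPT states contains the ball of
radius `1/√(N(N−1))` around the maximally mixed state. -/
theorem ppt_states_insphere_radius (K : ℕ) (hK : 2 ≤ K) (N : ℕ) (hN : N = K ^ 2)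
    (A : Matrix (Fin K × Fin K) (Fin K × Fin K) ℂ) (hherm : A.IsHermitian)
    (htr : A.trace = 1)
    (hdist : Real.sqrt (((A - (N : ℂ)⁻¹ • 1)ᴴ * (A - (N : ℂ)⁻¹ • 1)).trace.re)
      ≤ 1 / Real.sqrt (N * (N - 1))) :
    A.PosSemidef ∧ (partialTranspose A).PosSemidef :=
  ppt_states_insphere_radius_general K N hN A hherm htr hdist
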